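/- arXiv:2312.10403 — 2 statements merged into one kernel-verified Lean document; each statement's English description precedes it below -/
import Mathlib

section
/- Let A ∈ ℝ^{m×n}, M ∈ ℝ^{n×n} symmetric positive definite, and suppose matrices P ∈ ℝ^{m×(k+1)} with Pᵀ P = I_{k+1}, Q ∈ ℝ^{n×k} with Qᵀ M Q = I_k, B ∈ ℝ^{(k+1)×k}, a scalar α ∈ ℝ, and a vector q ∈ ℝⁿ satisfy A Q = P B and M⁻¹ Aᵀ P = Q Bᵀ + α q e_{k+1}ᵀ, where e_{k+1} is the last standard basis vector of ℝ^{k+1}. If (θ, y, h) with y ∈ ℝ^{k+1}, h ∈ ℝᵏ satisfies B h = θ y and Bᵀ y = θ h (an SVD triplet of B), then the vectors v̄ := Q h and ū := P y satisfy A v̄ − θ ū = 0 and Aᵀ ū − θ M v̄ = α (e_{k+1}ᵀ y) M q. -/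
open Matrix

/-- Euclidean norm of a vector. -/
noncomputable def vecEnorm {m : ℕ} (x : Fin m → ℝ) : ℝ := Real.sqrt (x ⬝ᵥ x)

/-- M-weighted norm of a vector: ‖x‖_M = (xᵀ M x)^{1/2}. -/
noncomputable def mnorm {n : ℕ} (M : Matrix (Fin n) (Fin n) ℝ) (x : Fin n → ℝ) : ℝ :=
  Real.sqrt (x ⬝ᵥ M.mulVec x)

/-- Weighted matrix norm ‖A‖_{M,2} = sup_{x ≠ 0} ‖Ax‖₂ / ‖x‖_M. -/
noncomputable def wnorm {m n : ℕ} (A : Matrix (Fin m) (Fin n) ℝ)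
    (M : Matrix (Fin n) (Fin n) ℝ) : ℝ :=
  sSup {t : ℝ | ∃ x : Fin n → ℝ, x ≠ 0 ∧ t = vecEnorm (A.mulVec x) / mnorm M x}

/-- The m×n "diagonal" matrix with entries σ₁,…,σ_r on the leading diagonal and zeros elsewhere. -/
noncomputable def wsvdSigma (m n r : ℕ) (σ : Fin r → ℝ) : Matrix (Fin m) (Fin n) ℝ :=
  Matrix.of fun i j => if h : (i : ℕ) = (j : ℕ) ∧ (i : ℕ) < r then σ ⟨i, h.2⟩ else 0

theorem stmt_14 {m n k : ℕ} (A : Matrix (Fin m) (Fin n) ℝ) (M : Matrix (Fin n) (Fin n) ℝ)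
    (hM : M.PosDef)
    (P : Matrix (Fin m) (Fin (k + 1)) ℝ) (Q : Matrix (Fin n) (Fin k) ℝ)
    (B : Matrix (Fin (k + 1)) (Fin k) ℝ) (α : ℝ) (q : Fin n → ℝ)
    (hP : Pᵀ * P = 1) (hQ : Qᵀ * M * Q = 1)
    (h1 : A * Q = P * B)
    (h2 : M⁻¹ * Aᵀ * P = Q * Bᵀ + α • vecMulVec q (Pi.single (Fin.last k) 1))
    (θ : ℝ) (y : Fin (k + 1) → ℝ) (h : Fin k → ℝ)
    (hBh : B.mulVec h = θ • y) (hBy : Bᵀ.mulVec y = θ • h) :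
    A.mulVec (Q.mulVec h) - θ • P.mulVec y = 0 ∧
    Aᵀ.mulVec (P.mulVec y) - θ • M.mulVec (Q.mulVec h) =
      (α * y (Fin.last k)) • M.mulVec q := by
  constructor
  · rw [mulVec_mulVec, h1, ← mulVec_mulVec, hBh, mulVec_smul, sub_self]
  · have h3 : Aᵀ * P = M * (Q * Bᵀ + α • vecMulVec q (Pi.single (Fin.last k) 1)) := by
      rw [← h2, ← Matrix.mul_assoc, ← Matrix.mul_assoc,
        Matrix.mul_nonsing_inv M (isUnit_iff_ne_zero.mpr hM.det_pos.ne'), Matrix.one_mul]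
    have hv : vecMulVec q (Pi.single (Fin.last k) 1) *ᵥ y = y (Fin.last k) • q := by
      ext i
      simp only [vecMulVec_apply, mulVec, dotProduct, Pi.smul_apply, smul_eq_mul]
      rw [Finset.sum_eq_single (Fin.last k)]
      · simp [mul_comm]
      · intro b _ hb; simp [Pi.single_apply, hb]
      · simp
    rw [mulVec_mulVec, h3, ← mulVec_mulVec, add_mulVec, smul_mulVec, hv,
      ← mulVec_mulVec, hBy, mulVec_smul, mulVec_add, mulVec_smul, mulVec_smul,
      M.mulVec_smul, smul_smul]
    abel
end

section
/- Let A ∈ ℝ^{m×n}, b ∈ ℝᵐ, and M ∈ ℝ^{n×n} symmetric positive definite, with weighted SVD Uᵀ A V = Σ, weighted singular values σ₁ ≥ … ≥ σ_r > 0, r = rank(A). Fix 1 ≤ k ≤ r and let S_k = span{v₁,…,v_k}. Then ‖Ax − b‖₂ has a unique minimizer over x ∈ S_k, namely x_k = Σ_{i=1}^{k} (u_iᵀ b / σ_i) v_i (the truncated WSVD solution). -/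
open Matrix

noncomputable def wAux {m k : ℕ} (s : Fin k → ℝ) (β : Fin m → ℝ) (c : Fin k → ℝ) :
    Fin m → ℝ :=
  fun j => (if h : (j : ℕ) < k then s ⟨j, h⟩ * c ⟨j, h⟩ else 0) - β j

noncomputable def csAux {m k : ℕ} (hkm : k ≤ m) (s : Fin k → ℝ) (β : Fin m → ℝ) :
    Fin k → ℝ :=
  fun i => β ⟨i, lt_of_lt_of_le i.2 hkm⟩ / s i

lemma wAux_cs {m k : ℕ} (hkm : k ≤ m) (s : Fin k → ℝ) (hs : ∀ i, 0 < s i) (β : Fin m → ℝ)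
    (j : Fin m) : wAux s β (csAux hkm s β) j = if (j : ℕ) < k then 0 else -β j := by
  unfold wAux csAux
  by_cases hj : (j : ℕ) < k
  · rw [dif_pos hj, if_pos hj]
    have h1 : (⟨((⟨(j:ℕ), hj⟩ : Fin k) : ℕ), lt_of_lt_of_le (Fin.is_lt _) hkm⟩ : Fin m) = j :=
      Fin.ext rfl
    rw [h1, mul_div_cancel₀ _ (ne_of_gt (hs _))]
    ring
  · rw [dif_neg hj, if_neg hj]; ring

lemma wAux_term_le {m k : ℕ} (hkm : k ≤ m) (s : Fin k → ℝ) (hs : ∀ i, 0 < s i)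
    (β : Fin m → ℝ) (c : Fin k → ℝ) (j : Fin m) :
    wAux s β (csAux hkm s β) j * wAux s β (csAux hkm s β) j ≤ wAux s β c j * wAux s β c j := by
  rw [wAux_cs hkm s hs β j]
  by_cases hj : (j : ℕ) < k
  · rw [if_pos hj]; simpa using mul_self_nonneg (wAux s β c j)
  · rw [if_neg hj]
    unfold wAux
    rw [dif_neg hj]
    ring_nf
    exact le_refl _

lemma wAux_eq_cs {m k : ℕ} (hkm : k ≤ m) (s : Fin k → ℝ) (hs : ∀ i, 0 < s i)
    (β : Fin m → ℝ) (c : Fin k → ℝ)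
    (h : ∀ j : Fin m, wAux s β (csAux hkm s β) j * wAux s β (csAux hkm s β) j
        = wAux s β c j * wAux s β c j) : c = csAux hkm s β := by
  funext i
  have hj : ((⟨(i : ℕ), lt_of_lt_of_le i.2 hkm⟩ : Fin m) : ℕ) < k := i.2
  have h1 := h ⟨(i : ℕ), lt_of_lt_of_le i.2 hkm⟩
  rw [wAux_cs hkm s hs β, if_pos hj] at h1
  have hz : wAux s β c ⟨(i : ℕ), lt_of_lt_of_le i.2 hkm⟩ = 0 := by nlinarith [h1]
  unfold wAux at hz
  rw [dif_pos hj] at hz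
  have hi : (⟨((⟨(i:ℕ), lt_of_lt_of_le i.2 hkm⟩ : Fin m) : ℕ), hj⟩ : Fin k) = i := Fin.ext rfl
  rw [hi] at hz
  unfold csAux
  rw [eq_div_iff (ne_of_gt (hs i))]
  linarith [hz]

theorem stmt_16 {m n r : ℕ} (A : Matrix (Fin m) (Fin n) ℝ) (b : Fin m → ℝ)
    (M : Matrix (Fin n) (Fin n) ℝ)
    (hM : M.PosDef) (U : Matrix (Fin m) (Fin m) ℝ) (V : Matrix (Fin n) (Fin n) ℝ)
    (σ : Fin r → ℝ) (hr : r = A.rank) (hrm : r ≤ m) (hrn : r ≤ n)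
    (hU : Uᵀ * U = 1) (hV : Vᵀ * M * V = 1)
    (hσpos : ∀ i, 0 < σ i) (hσmono : ∀ i j : Fin r, i ≤ j → σ j ≤ σ i)
    (hSVD : Uᵀ * A * V = wsvdSigma m n r σ)
    (k : ℕ) (hk1 : 1 ≤ k) (hkr : k ≤ r)
    (Sk : Submodule ℝ (Fin n → ℝ))
    (hSk : Sk = Submodule.span ℝ
      (Set.range fun i : Fin k => fun l => V l (Fin.castLE hrn (Fin.castLE hkr i))))
    (xk : Fin n → ℝ)
    (hxk : xk = ∑ i : Fin k,
      (((fun l => U l (Fin.castLE hrm (Fin.castLE hkr i))) ⬝ᵥ b) / σ (Fin.castLE hkr i)) •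
        (fun l => V l (Fin.castLE hrn (Fin.castLE hkr i)))) :
    xk ∈ Sk ∧
    (∀ x ∈ Sk, vecEnorm (A.mulVec xk - b) ≤ vecEnorm (A.mulVec x - b)) ∧
    ∀ x ∈ Sk, (∀ y ∈ Sk, vecEnorm (A.mulVec x - b) ≤ vecEnorm (A.mulVec y - b)) → x = xk := by
  have hkm : k ≤ m := le_trans hkr hrm
  have hUU : U * Uᵀ = 1 := mul_eq_one_comm.mp hU
  have hem : ∀ i : Fin k, (Fin.castLE hrm (Fin.castLE hkr i) : Fin m)
      = ⟨(i : ℕ), lt_of_lt_of_le i.2 hkm⟩ := fun i => Fin.ext rfl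
  set v : Fin k → (Fin n → ℝ) := fun i => fun l => V l (Fin.castLE hrn (Fin.castLE hkr i))
    with hv
  set β : Fin m → ℝ := Uᵀ.mulVec b with hβ
  set σ' : Fin k → ℝ := fun i => σ (Fin.castLE hkr i) with hσ'
  have hσ'pos : ∀ i, 0 < σ' i := fun i => hσpos _
  -- A * V = U * Σ
  have hAV : A * V = U * wsvdSigma m n r σ := by
    rw [← hSVD, ← Matrix.mul_assoc, ← Matrix.mul_assoc, hUU, Matrix.one_mul]
  -- A acting on v i
  have hAv : ∀ i : Fin k, A.mulVec (v i)
      = U.mulVec (σ' i • (Pi.single (⟨(i : ℕ), lt_of_lt_of_le i.2 hkm⟩ : Fin m) 1 : Fin m → ℝ)) := by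
    intro i
    have h1 : v i = V.mulVec (Pi.single (Fin.castLE hrn (Fin.castLE hkr i)) 1) := by
      ext l; simp [hv, Matrix.mulVec_single]
    have h2 : (wsvdSigma m n r σ).mulVec (Pi.single (Fin.castLE hrn (Fin.castLE hkr i)) 1)
        = σ' i • (Pi.single (⟨(i : ℕ), lt_of_lt_of_le i.2 hkm⟩ : Fin m) 1 : Fin m → ℝ) := by
      ext j
      simp only [Matrix.mulVec_single, wsvdSigma, Matrix.of_apply, Pi.smul_apply,
        Pi.single_apply, smul_eq_mul, mul_one, Matrix.col, Matrix.transpose_apply,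
        MulOpposite.op_one, one_smul]
      by_cases hji : (j : ℕ) = (i : ℕ)
      · have hjr : (j : ℕ) < r := hji ▸ lt_of_lt_of_le i.2 hkr
        rw [dif_pos ⟨hji, hjr⟩]
        rw [if_pos (Fin.ext hji)]
        rw [mul_one, hσ']
        congr 1
        exact Fin.ext hji
      · rw [dif_neg (fun hc => hji hc.1)]
        rw [if_neg (fun hc => hji (congrArg Fin.val hc))]
        ring
    rw [h1, Matrix.mulVec_mulVec, hAV, ← Matrix.mulVec_mulVec, h2]
  -- residual identity
  have hres : ∀ c : Fin k → ℝ,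
      A.mulVec (∑ i, c i • v i) - b = U.mulVec (wAux σ' β c) := by
    intro c
    have hb : U.mulVec β = b := by
      rw [hβ, Matrix.mulVec_mulVec, hUU, Matrix.one_mulVec]
    have hx : A.mulVec (∑ i, c i • v i) =
        U.mulVec (∑ i, (σ' i * c i) •
          (Pi.single (⟨(i : ℕ), lt_of_lt_of_le i.2 hkm⟩ : Fin m) 1 : Fin m → ℝ)) := by
      rw [← A.mulVecLin_apply, map_sum, ← U.mulVecLin_apply, map_sum]
      refine Finset.sum_congr rfl fun i _ => ?_
      rw [_root_.map_smul, _root_.map_smul, A.mulVecLin_apply, U.mulVecLin_apply, hAv i,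
        Matrix.mulVec_smul, smul_smul, mul_comm (c i) (σ' i)]
    have hsum : (∑ i, (σ' i * c i) •
        (Pi.single (⟨(i : ℕ), lt_of_lt_of_le i.2 hkm⟩ : Fin m) 1 : Fin m → ℝ)) - β
        = wAux σ' β c := by
      ext j
      simp only [Pi.sub_apply, Finset.sum_apply, Pi.smul_apply, Pi.single_apply,
        smul_eq_mul, mul_one, wAux]
      congr 1
      by_cases hj : (j : ℕ) < k
      · rw [dif_pos hj]
        rw [Finset.sum_eq_single (⟨(j : ℕ), hj⟩ : Fin k)]
        · rw [if_pos (Fin.ext rfl), mul_one]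
        · intro i _ hi
          rw [if_neg, mul_zero]
          intro hc
          exact hi (Fin.ext (congrArg Fin.val hc).symm)
        · intro hmem; exact absurd (Finset.mem_univ _) hmem
      · rw [dif_neg hj]
        refine Finset.sum_eq_zero fun i _ => ?_
        rw [if_neg, mul_zero]
        intro hc
        exact hj ((congrArg Fin.val hc) ▸ i.2)
    rw [hx, ← hsum, Matrix.mulVec_sub, hb]
  -- squared norm formula
  have hdot : ∀ c : Fin k → ℝ,
      (A.mulVec (∑ i, c i • v i) - b) ⬝ᵥ (A.mulVec (∑ i, c i • v i) - b)
        = ∑ j, wAux σ' β c j * wAux σ' β c j := by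
    intro c
    rw [hres c, Matrix.dotProduct_mulVec, ← Matrix.mulVec_transpose, Matrix.mulVec_mulVec,
      hU, Matrix.one_mulVec]
    rfl
  have hβdot : ∀ i : Fin k, β ⟨(i : ℕ), lt_of_lt_of_le i.2 hkm⟩
      = (fun l => U l (Fin.castLE hrm (Fin.castLE hkr i))) ⬝ᵥ b := by
    intro i
    rw [hβ, ← hem i]
    simp [Matrix.mulVec, dotProduct, Matrix.transpose_apply]
  have hxkc : xk = ∑ i, csAux hkm σ' β i • v i := by
    rw [hxk]
    refine Finset.sum_congr rfl fun i _ => ?_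
    unfold csAux
    rw [hβdot i]
  have hmemb : ∀ x, x ∈ Sk ↔ ∃ c : Fin k → ℝ, ∑ i, c i • v i = x := by
    intro x
    rw [hSk]
    exact Submodule.mem_span_range_iff_exists_fun ℝ
  have hxkmem : xk ∈ Sk := (hmemb xk).mpr ⟨csAux hkm σ' β, hxkc.symm⟩
  have hle : ∀ x ∈ Sk, vecEnorm (A.mulVec xk - b) ≤ vecEnorm (A.mulVec x - b) := by
    intro x hx
    obtain ⟨c, hc⟩ := (hmemb x).mp hx
    rw [← hc, hxkc]
    unfold vecEnorm
    apply Real.sqrt_le_sqrt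
    rw [hdot, hdot]
    exact Finset.sum_le_sum fun j _ => wAux_term_le hkm σ' hσ'pos β c j
  refine ⟨hxkmem, hle, ?_⟩
  intro x hx hmin
  obtain ⟨c, hc⟩ := (hmemb x).mp hx
  have heq : vecEnorm (A.mulVec x - b) = vecEnorm (A.mulVec xk - b) :=
    le_antisymm (hmin xk hxkmem) (by rw [hxkc] at *; exact hle x hx)
  have hnneg : ∀ y : Fin m → ℝ, (0:ℝ) ≤ y ⬝ᵥ y := fun y =>
    Finset.sum_nonneg fun j _ => mul_self_nonneg (y j)
  have h3 : (A.mulVec x - b) ⬝ᵥ (A.mulVec x - b)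
      = (A.mulVec xk - b) ⬝ᵥ (A.mulVec xk - b) := by
    unfold vecEnorm at heq
    exact (Real.sqrt_inj (hnneg _) (hnneg _)).mp heq
  rw [← hc, hxkc, hdot, hdot] at h3
  have hall := (Finset.sum_eq_sum_iff_of_le
    (fun j (_ : j ∈ Finset.univ) => wAux_term_le hkm σ' hσ'pos β c j)).mp h3.symm
  have hceq : c = csAux hkm σ' β :=
    wAux_eq_cs hkm σ' hσ'pos β c fun j => hall j (Finset.mem_univ j)
  rw [← hc, hceq, ← hxkc]
end
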